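/- Let X = xx* with ||x||_2 = 1, let Δ ∈ H^d satisfy tr(Δ_T) + ||Δ_T^⊥||_1 > 0 where Δ_T = P_T(Δ). Then ||X + Δ||_1 > ||X||_1. (Via the pinching inequality ||X + Δ||_1 ≥ ||X||_1 + tr(Δ_T) + ||Δ_T^⊥||_1.) -/

import Mathlib

open Matrix BigOperators ComplexOrder

/-- The trace norm `‖M‖₁ = tr √(Mᴴ M)`. -/
noncomputable def tnorm {d : ℕ} (M : Matrix (Fin d) (Fin d) ℂ) : ℝ :=
  (((Matrix.posSemidef_conjTranspose_mul_self M).1.eigenvectorUnitary : Matrix (Fin d) (Fin d) ℂ) *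
    diagonal ((fun r : ℝ => (r : ℂ)) ∘ (√·) ∘ (Matrix.posSemidef_conjTranspose_mul_self M).1.eigenvalues) *
    (star (Matrix.posSemidef_conjTranspose_mul_self M).1.eigenvectorUnitary :
      Matrix (Fin d) (Fin d) ℂ)).trace.re

/-- The Frobenius norm `‖M‖₂ = √tr(Mᴴ M)`. -/
noncomputable def fnorm {d : ℕ} (M : Matrix (Fin d) (Fin d) ℂ) : ℝ :=
  Real.sqrt (((Mᴴ * M).trace).re)

/-- The operator norm of a matrix, acting on Euclidean space `ℂ^d`. -/
noncomputable def onorm {d : ℕ} (M : Matrix (Fin d) (Fin d) ℂ) : ℝ :=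
  ‖Matrix.toEuclideanCLM (𝕜 := ℂ) M‖

/-- `P_T(Z) = XZ + ZX − tr(XZ)·X`. -/
noncomputable def PT {d : ℕ} (X Z : Matrix (Fin d) (Fin d) ℂ) : Matrix (Fin d) (Fin d) ℂ :=
  X * Z + Z * X - (X * Z).trace • X

/-!
For an orthogonal projection `P` with complement `Q = 1 - P` and a Hermitian `M`, choose a
Hermitian unitary `S` (the sign of `QMQ`) with `tr (S QMQ) = ‖QMQ‖₁`. Then `U = P + QSQ` is a
Hermitian contraction (`1 - U² = QS P SQ ≥ 0`), and the variational bound `Re tr (UM) ≤ ‖M‖₁`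
(diagonalize `M`: a contraction has diagonal entries of modulus at most one) gives
`Re tr (PM) + ‖QMQ‖₁ ≤ ‖M‖₁`. For the rank-one projection `X = xx*` and `M = X + Δ` we have
`XΔX = tr (XΔ) X`, hence `QMQ = Δ - P_T(Δ)`, `tr (XM) = 1 + tr (P_T(Δ))` and `‖X‖₁ = 1`.
-/

theorem Matrix.vecMulVec_mul_mul_vecMulVec {n α : Type*} [Fintype n] [CommRing α]
    (u v : n → α) (M : Matrix n n α) :
    vecMulVec u v * M * vecMulVec u v = (vecMulVec u v * M).trace • vecMulVec u v := by
  rw [vecMulVec_mul, vecMulVec_mul_vecMulVec, trace_vecMulVec, dotProduct_comm,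
    vecMulVec_smul]

theorem norm_diag_le_one_of_posSemidef_one_sub {n : Type*} [Fintype n] [DecidableEq n]
    {B : Matrix n n ℂ} (hB : (1 - Bᴴ * B).PosSemidef) (i : n) : ‖B i i‖ ≤ 1 := by
  have hcol : ‖B i i‖ ^ 2 ≤ ((Bᴴ * B) i i).re := by
    have : ((Bᴴ * B) i i).re = ∑ j, ‖B j i‖ ^ 2 := by
      simp [mul_apply, Complex.re_sum, ← Complex.normSq_eq_conj_mul_self, Complex.sq_norm]
    rw [this]
    exact Finset.single_le_sum (f := fun j => ‖B j i‖ ^ 2) (fun j _ => by positivity)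
      (Finset.mem_univ i)
  have hle : ((Bᴴ * B) i i).re ≤ 1 := by
    have := Complex.nonneg_iff.mp (hB.diag_nonneg (i := i))
    simp only [Matrix.sub_apply, one_apply_eq, Complex.sub_re, Complex.one_re] at this
    linarith [this.1]
  nlinarith [norm_nonneg (B i i)]

section TraceNorm

variable {d : ℕ}

open scoped MatrixOrder in
theorem tnorm_eq_re_trace_of_mul_self_eq {M C : Matrix (Fin d) (Fin d) ℂ} (hC : C.PosSemidef)
    (h : C * C = Mᴴ * M) : tnorm M = C.trace.re := by
  -- `C = √(MᴴM)` by uniqueness of square roots, and `tnorm M` is the spectral form of `√(MᴴM)`.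
  have hMM := posSemidef_conjTranspose_mul_self M
  have hsqrt : CFC.sqrt (Mᴴ * M) = C := CFC.sqrt_unique h (nonneg_iff_posSemidef.mpr hC)
  rw [CFC.sqrt_eq_real_sqrt _ (nonneg_iff_posSemidef.mpr hMM), cfcₙ_eq_cfc, hMM.1.cfc_eq,
    IsHermitian.cfc, Unitary.conjStarAlgAut_apply] at hsqrt
  rw [tnorm, ← hsqrt]
  rfl

theorem tnorm_eq_re_trace_of_posSemidef {C : Matrix (Fin d) (Fin d) ℂ} (hC : C.PosSemidef) :
    tnorm C = C.trace.re :=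
  tnorm_eq_re_trace_of_mul_self_eq hC (by rw [hC.1.eq])

open scoped MatrixOrder in
theorem tnorm_eq_re_trace_cfc_abs {A : Matrix (Fin d) (Fin d) ℂ} (hA : A.IsHermitian) :
    tnorm A = (cfc (fun r : ℝ => |r|) A).trace.re := by
  refine tnorm_eq_re_trace_of_mul_self_eq
    (nonneg_iff_posSemidef.mp (cfc_nonneg fun _ _ => abs_nonneg _)) ?_
  rw [← cfc_mul .., hA.eq]
  simp only [abs_mul_abs_self]
  rw [cfc_mul (fun r : ℝ => r) (fun r : ℝ => r) A, cfc_id' ℝ A]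

theorem tnorm_eq_sum_abs_eigenvalues {A : Matrix (Fin d) (Fin d) ℂ} (hA : A.IsHermitian) :
    tnorm A = ∑ i, |hA.eigenvalues i| := by
  rw [tnorm_eq_re_trace_cfc_abs hA, hA.cfc_eq, IsHermitian.cfc, Unitary.conjStarAlgAut_apply,
    trace_mul_cycle, Unitary.coe_star_mul_self, one_mul, trace_diagonal]
  simp

theorem re_trace_mul_le_tnorm {M U : Matrix (Fin d) (Fin d) ℂ} (hM : M.IsHermitian)
    (hU : (1 - Uᴴ * U).PosSemidef) : (U * M).trace.re ≤ tnorm M := by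
  set V : Matrix (Fin d) (Fin d) ℂ := ↑hM.eigenvectorUnitary
  have hV : Vᴴ * V = 1 := Unitary.coe_star_mul_self hM.eigenvectorUnitary
  have hV' : V * Vᴴ = 1 := Unitary.coe_mul_star_self hM.eigenvectorUnitary
  set B := Vᴴ * U * V
  have hB : (1 - Bᴴ * B).PosSemidef := by
    have hconj : 1 - Bᴴ * B = Vᴴ * (1 - Uᴴ * U) * V := by
      simp only [B, conjTranspose_mul, conjTranspose_conjTranspose, mul_sub, sub_mul, mul_one,
        hV, mul_assoc]
      rw [← mul_assoc V Vᴴ, hV', one_mul]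
    rw [hconj]
    exact hU.conjTranspose_mul_mul_same V
  have htrace : (U * M).trace = ∑ i, B i i * hM.eigenvalues i := by
    conv_lhs => rw [hM.spectral_theorem, Unitary.conjStarAlgAut_apply]
    rw [← mul_assoc, ← mul_assoc, trace_mul_cycle]
    change (Vᴴ * (U * V) * _).trace = _
    rw [← mul_assoc]
    simp [trace, mul_diagonal, B]
  rw [htrace, Complex.re_sum, tnorm_eq_sum_abs_eigenvalues hM]
  refine Finset.sum_le_sum fun i _ => ?_
  calc (B i i * hM.eigenvalues i).re = (B i i).re * hM.eigenvalues i := Complex.re_mul_ofReal _ _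
    _ ≤ |(B i i).re| * |hM.eigenvalues i| := by rw [← abs_mul]; exact le_abs_self _
    _ ≤ 1 * |hM.eigenvalues i| := by
      gcongr
      exact (Complex.abs_re_le_norm _).trans (norm_diag_le_one_of_posSemidef_one_sub hB i)
    _ = |hM.eigenvalues i| := one_mul _

theorem exists_isHermitian_mul_self_eq_one_re_trace_mul_eq_tnorm {A : Matrix (Fin d) (Fin d) ℂ}
    (hA : A.IsHermitian) :
    ∃ S : Matrix (Fin d) (Fin d) ℂ, S.IsHermitian ∧ S * S = 1 ∧ (S * A).trace.re = tnorm A := by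
  have hcont (f : ℝ → ℝ) : ContinuousOn f (spectrum ℝ A) :=
    A.finite_real_spectrum.continuousOn f
  set sgn : ℝ → ℝ := fun r => if 0 ≤ r then 1 else -1
  refine ⟨cfc sgn A, cfc_predicate sgn A, ?_, ?_⟩
  · rw [← cfc_mul sgn sgn A (hcont _) (hcont _)]
    refine (cfc_congr fun r _ => ?_).trans (cfc_const_one ℝ A)
    by_cases hr : 0 ≤ r <;> simp [sgn, hr]
  · nth_rewrite 2 [← cfc_id' ℝ A]
    rw [← cfc_mul sgn (fun r => r) A (hcont _) (hcont _), tnorm_eq_re_trace_cfc_abs hA]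
    have hsgn_mul (r : ℝ) : sgn r * r = |r| := by
      by_cases hr : 0 ≤ r
      · simp [sgn, hr, abs_of_nonneg hr]
      · simp [sgn, hr, abs_of_neg (not_le.mp hr)]
    simp only [hsgn_mul]

theorem re_trace_mul_add_tnorm_compl_le_tnorm {P M : Matrix (Fin d) (Fin d) ℂ}
    (hP : P.IsHermitian) (hPP : P * P = P) (hM : M.IsHermitian) :
    (P * M).trace.re + tnorm ((1 - P) * M * (1 - P)) ≤ tnorm M := by
  set Q := 1 - P
  have hQ : Q.IsHermitian := isHermitian_one.sub hP
  have hQQ : Q * Q = Q := by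
    simp only [Q, sub_mul, mul_sub, one_mul, mul_one, hPP, sub_self, sub_zero]
  have hPQ : P * Q = 0 := by simp only [Q, mul_sub, mul_one, hPP, sub_self]
  have hQP : Q * P = 0 := by simp only [Q, sub_mul, one_mul, hPP, sub_self]
  have hQMQ : (Q * M * Q).IsHermitian := by
    simpa only [hQ.eq] using isHermitian_conjTranspose_mul_mul Q hM
  obtain ⟨S, hS, hSS, hSQMQ⟩ := exists_isHermitian_mul_self_eq_one_re_trace_mul_eq_tnorm hQMQ
  set U := P + Q * S * Q
  have hU : (1 - Uᴴ * U).PosSemidef := by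
    have hUU : Uᴴ * U = P + Q * S * Q * S * Q := by
      have hUh : Uᴴ = U := by
        simp only [U, conjTranspose_add, conjTranspose_mul, hP.eq, hQ.eq, hS.eq, mul_assoc]
      rw [hUh]
      simp only [U, add_mul, mul_add, mul_assoc]
      rw [hPP, ← mul_assoc P Q, hPQ, hQP, ← mul_assoc Q Q, hQQ]
      simp only [zero_mul, mul_zero, zero_add, add_zero]
    have hcompl : 1 - Uᴴ * U = (Q * S) * P * (Q * S)ᴴ := by
      have hP' : P = 1 - Q := by simp only [Q, sub_sub_cancel]
      rw [hUU, conjTranspose_mul, hS.eq, hQ.eq, hP']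
      simp only [mul_sub, sub_mul, mul_one, mul_assoc]
      rw [← mul_assoc S S, hSS, one_mul, hQQ]
      abel
    rw [hcompl]
    have hPpsd : P.PosSemidef := by
      simpa only [hP.eq, hPP] using posSemidef_conjTranspose_mul_self P
    exact hPpsd.mul_mul_conjTranspose_same (Q * S)
  have htrace : (U * M).trace = (P * M).trace + (S * (Q * M * Q)).trace := by
    rw [add_mul, trace_add, mul_assoc, mul_assoc, trace_mul_comm Q]
    simp only [mul_assoc]
  calc (P * M).trace.re + tnorm (Q * M * Q) = (U * M).trace.re := by
        rw [htrace, Complex.add_re, hSQMQ]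
    _ ≤ tnorm M := re_trace_mul_le_tnorm hM hU

end TraceNorm

/-- Pinching: if `tr(Δ_T) + ‖Δ_T^⊥‖₁ > 0`, then `‖X + Δ‖₁ > ‖X‖₁`. -/
theorem stmt19 {d : ℕ} (x : Fin d → ℂ) (hx : ∑ j, ‖x j‖ ^ 2 = 1)
    (X : Matrix (Fin d) (Fin d) ℂ) (hX : X = Matrix.vecMulVec x (star x))
    (Δ : Matrix (Fin d) (Fin d) ℂ) (hΔ : Δ.IsHermitian)
    (h : 0 < ((PT X Δ).trace).re + tnorm (Δ - PT X Δ)) :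
    tnorm X < tnorm (X + Δ) := by
  have hunit : x ⬝ᵥ star x = 1 := by
    simp only [dotProduct, Pi.star_apply, RCLike.star_def, Complex.mul_conj,
      Complex.normSq_eq_norm_sq]
    exact_mod_cast hx
  have hXpsd : X.PosSemidef := hX ▸ posSemidef_vecMulVec_self_star x
  have hXX : X * X = X := by
    rw [hX, vecMulVec_mul_vecMulVec, dotProduct_comm, hunit, one_smul]
  have htrX : X.trace = 1 := by rw [hX, trace_vecMulVec, hunit]
  have hXΔX : X * Δ * X = (X * Δ).trace • X := hX ▸ vecMulVec_mul_mul_vecMulVec x (star x) Δ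
  have hcompl : (1 - X) * (X + Δ) * (1 - X) = Δ - PT X Δ := by
    simp only [PT, sub_mul, mul_sub, one_mul, mul_one, add_mul, mul_add, hXX, ← hXΔX]
    abel
  have htrPT : (PT X Δ).trace = (X * Δ).trace := by
    rw [PT, trace_sub, trace_add, trace_smul, trace_mul_comm Δ X, htrX, smul_eq_mul, mul_one,
      add_sub_cancel_right]
  have hpinch := re_trace_mul_add_tnorm_compl_le_tnorm hXpsd.1 hXX (hXpsd.1.add hΔ)
  rw [hcompl, mul_add, hXX, trace_add, htrX, ← htrPT, Complex.add_re, Complex.one_re] at hpinch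
  rw [tnorm_eq_re_trace_of_posSemidef hXpsd, htrX, Complex.one_re]
  linarith
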